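/- Let M be a one-way deterministic one-counter automaton with state set Q and counter bound m, fix a symbol σ, and consider the nonzero-mode dynamics for σ. Starting from state q with counter offset 0, let (q_k, d_k) be the nonzero-mode sequence, let n₁ < n₂ be minimal such that q₀, q₁, …, q_{n₂−1} are pairwise distinct and q_{n₁} = q_{n₂}, and set r = d_{n₂} − d_{n₁} (the difference of the cycle entered from q). Then for all integers v and v' such that v − v' is an integer multiple of r, the configurations (q,v) and (q,v') are σ-synchronized under the nonzero-mode dynamics: there exist nonnegative integers a and b such that the nonzero-mode configuration reached from (q,v) after a steps equals the nonzero-mode configuration reached from (q,v') after b steps. -/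

import Mathlib

/-- Input symbols extended with the left (`cent`) and right (`dollar`) end-markers. -/
inductive TSym (α : Type) : Type
  | cent : TSym α
  | letter : α → TSym α
  | dollar : TSym α

/-- The tape content `¢ w $` for an input word `w`. -/
def tagged {α : Type} (w : List α) : List (TSym α) :=
  TSym.cent :: (w.map TSym.letter ++ [TSym.dollar])

/-- A one-way deterministic one-counter automaton. -/
structure OneD1CA (α : Type) where
  Q : Type
  [fintypeQ : Fintype Q]
  [decQ : DecidableEq Q]
  q0 : Q
  acc : Set Q
  m : ℕ
  δ : Q → TSym α → Bool → Q × ℤ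
  bound : ∀ q σ z, |(δ q σ z).2| ≤ (m : ℤ)

attribute [instance] OneD1CA.fintypeQ OneD1CA.decQ

namespace OneD1CA

variable {α : Type} (M : OneD1CA α)

/-- One computation step on a configuration (state, counter value). -/
def step (p : M.Q × ℤ) (σ : TSym α) : M.Q × ℤ :=
  ((M.δ p.1 σ (decide (p.2 = 0))).1, p.2 + (M.δ p.1 σ (decide (p.2 = 0))).2)

/-- Configuration reached from the initial configuration after reading a list of tape symbols. -/
def confAfter (l : List (TSym α)) : M.Q × ℤ :=
  l.foldl M.step (M.q0, 0)

/-- The automaton accepts `w` iff the state after reading `¢ w $` is accepting. -/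
def accepts (w : List α) : Prop :=
  (M.confAfter (tagged w)).1 ∈ M.acc

/-- The automaton recognizes the language `L` if it accepts exactly the members of `L`. -/
def recognizes (L : Set (List α)) : Prop :=
  ∀ w : List α, M.accepts w ↔ w ∈ L

end OneD1CA

/-- The nonzero-mode step on configurations for the input symbol `σ`. -/
def nzStep {α : Type} (M : OneD1CA α) (σ : α) (p : M.Q × ℤ) : M.Q × ℤ :=
  ((M.δ p.1 (TSym.letter σ) false).1, p.2 + (M.δ p.1 (TSym.letter σ) false).2)

/-!
The nonzero-mode dynamics commutes with translating the counter. Hence once the orbit of `(q, 0)`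
enters its cycle of length `p = n₂ - n₁`, every further traversal of the cycle adds `r` to the
counter: `(q, 0)` reaches `(q_{n₁}, d_{n₁} + t r)` after `n₁ + t p` steps, for every `t`. Writing
`v - v' = (s - t) r` with `s, t ≥ 0`, both `(q, v)` and `(q, v')` reach `(q_{n₁}, d_{n₁} + v + t r)`,
after `n₁ + t p` and `n₁ + s p` steps respectively.
-/

def shiftCounter {S : Type*} (v : ℤ) : S × ℤ → S × ℤ :=
  Prod.map id (· + v)

@[simp]
lemma shiftCounter_apply {S : Type*} (v : ℤ) (x : S × ℤ) :
    shiftCounter v x = (x.1, x.2 + v) :=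
  rfl

lemma shiftCounter_shiftCounter {S : Type*} (u v : ℤ) (x : S × ℤ) :
    shiftCounter u (shiftCounter v x) = shiftCounter (v + u) x := by
  simp [add_assoc]

lemma commute_nzStep_shiftCounter {α : Type} (M : OneD1CA α) (σ : α) (v : ℤ) :
    Function.Commute (nzStep M σ) (shiftCounter v) := fun x => by
  simp only [nzStep, shiftCounter_apply]
  ring_nf

section ShiftInvariant

variable {S : Type*} {f : S × ℤ → S × ℤ}

lemma iterate_mul_eq_shiftCounter (hf : ∀ v, Function.Commute f (shiftCounter v))
    {p : ℕ} {r : ℤ} {y : S × ℤ} (hy : f^[p] y = shiftCounter r y) (t : ℕ) :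
    f^[t * p] y = shiftCounter (t * r) y := by
  induction t with
  | zero => simp
  | succ t ih =>
    rw [Nat.succ_mul, Function.iterate_add_apply, hy, (hf r).iterate_left, ih,
      shiftCounter_shiftCounter]
    congr 1
    push_cast
    ring

lemma exists_iterate_shiftCounter_eq (hf : ∀ v, Function.Commute f (shiftCounter v))
    {x : S × ℤ} {n p : ℕ} {r : ℤ} (hcycle : f^[p] (f^[n] x) = shiftCounter r (f^[n] x))
    {v v' : ℤ} (hvv' : r ∣ v - v') :
    ∃ a b : ℕ, f^[a] (shiftCounter v x) = f^[b] (shiftCounter v' x) := by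
  obtain ⟨c, hc⟩ := hvv'
  have hlaps (t : ℕ) (u : ℤ) :
      f^[n + t * p] (shiftCounter u x) = shiftCounter (t * r + u) (f^[n] x) := by
    rw [(hf u).iterate_left, add_comm, Function.iterate_add_apply,
      iterate_mul_eq_shiftCounter hf hcycle, shiftCounter_shiftCounter]
  refine ⟨n + (-c).toNat * p, n + c.toNat * p, ?_⟩
  have hc' : ((c.toNat : ℤ) - (-c).toNat) = c := by omega
  have hcounter : ((-c).toNat : ℤ) * r + v = c.toNat * r + v' := by
    linear_combination hc - r * hc'
  rw [hlaps, hlaps, hcounter]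

end ShiftInvariant

theorem stmt8_general {α : Type} (M : OneD1CA α) (σ : α) (q : M.Q)
    (n1 n2 : ℕ) (h12 : n1 < n2)
    (hcycle : ((nzStep M σ)^[n1] (q, 0)).1 = ((nzStep M σ)^[n2] (q, 0)).1)
    (r : ℤ)
    (hr : r = ((nzStep M σ)^[n2] (q, 0)).2 - ((nzStep M σ)^[n1] (q, 0)).2) :
    ∀ v v' : ℤ, r ∣ (v - v') →
      ∃ a b : ℕ, (nzStep M σ)^[a] (q, v) = (nzStep M σ)^[b] (q, v') := by
  intro v v' hvv'
  obtain ⟨p, rfl⟩ := Nat.exists_eq_add_of_lt h12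
  have hlap : (nzStep M σ)^[p + 1] ((nzStep M σ)^[n1] (q, 0))
      = shiftCounter r ((nzStep M σ)^[n1] (q, 0)) := by
    rw [← Function.iterate_add_apply, add_comm, ← add_assoc]
    ext
    · exact hcycle.symm
    · simp [hr]
  simpa using exists_iterate_shiftCounter_eq (commute_nzStep_shiftCounter M σ) hlap hvv'

/-- if `v - v'` is a multiple of the difference `r` of the cycle
entered from `q`, then `(q, v)` and `(q, v')` are `σ`-synchronized under the
nonzero-mode dynamics. -/
theorem stmt8 {α : Type} (M : OneD1CA α) (σ : α) (q : M.Q)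
    (n1 n2 : ℕ) (h12 : n1 < n2)
    (hdistinct : ∀ i j : ℕ, i < n2 → j < n2 →
      ((nzStep M σ)^[i] (q, 0)).1 = ((nzStep M σ)^[j] (q, 0)).1 → i = j)
    (hcycle : ((nzStep M σ)^[n1] (q, 0)).1 = ((nzStep M σ)^[n2] (q, 0)).1)
    (r : ℤ)
    (hr : r = ((nzStep M σ)^[n2] (q, 0)).2 - ((nzStep M σ)^[n1] (q, 0)).2) :
    ∀ v v' : ℤ, r ∣ (v - v') →
      ∃ a b : ℕ, (nzStep M σ)^[a] (q, v) = (nzStep M σ)^[b] (q, v') :=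
  stmt8_general M σ q n1 n2 h12 hcycle r hr
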